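/- Let S be a random vector uniformly distributed on the three points (1,0,2,0), (0,2,1,0), (0,2,0,1) in ℝ^4 (each with probability 1/3). Then S is not NRD, not NLTD, and not NRTD. In particular, E[S_3 | S_1 = 0] = 1/2 < 2 = E[S_3 | S_1 = 1], E[S_3 | S_1 ≤ 0] = 1/2 < 1 = E[S_3 | S_1 ≤ 1], and E[S_3 | S_1 ≥ 0] = 1 < 2 = E[S_3 | S_1 ≥ 1]. -/

import Mathlib

open scoped Classical
open Finset

noncomputable section

/-- Probability of the event `A` on a finite sample space with weights `w`. -/
def Pr {Ω : Type*} [Fintype Ω] (w : Ω → ℝ) (A : Ω → Prop) : ℝ :=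
  ∑ ω : Ω, if A ω then w ω else 0

/-- Expectation of `f` on a finite sample space with weights `w`. -/
def Expec {Ω : Type*} [Fintype Ω] (w : Ω → ℝ) (f : Ω → ℝ) : ℝ :=
  ∑ ω : Ω, w ω * f ω

/-- Conditional expectation of `f` given the event `A` under weights `w`. -/
def CExp {Ω : Type*} [Fintype Ω] (w : Ω → ℝ) (A : Ω → Prop) (f : Ω → ℝ) : ℝ :=
  (∑ ω : Ω, if A ω then w ω * f ω else 0) / Pr w A

/-- `[X_I | A] ≤_st [X_I | B]` : the conditional distribution of the subvector `X_I`
given the event `A` is dominated, in the usual stochastic order, by the conditional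
distribution of `X_I` given `B`; i.e. conditional expectations of every bounded
coordinatewise increasing function compare. -/
def CondSubvecStochLE {Ω : Type*} [Fintype Ω] {n : ℕ} (w : Ω → ℝ)
    (X : Ω → Fin n → ℝ) (I : Finset (Fin n)) (A B : Ω → Prop) : Prop :=
  ∀ φ : ({i : Fin n // i ∈ I} → ℝ) → ℝ, Monotone φ → (∃ C, ∀ v, |φ v| ≤ C) →
    CExp w A (fun ω => φ fun i => X ω i.1) ≤ CExp w B (fun ω => φ fun i => X ω i.1)

/-- Negative regression dependence: `[X_I | X_J = x_J] ≥_st [X_I | X_J = x_J*]`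
whenever `x_J ≤ x_J*` componentwise and both conditioning events have
positive probability. -/
def IsNRD {Ω : Type*} [Fintype Ω] {n : ℕ} (w : Ω → ℝ) (X : Ω → Fin n → ℝ) : Prop :=
  ∀ I J : Finset (Fin n), Disjoint I J → ∀ x y : Fin n → ℝ, (∀ j ∈ J, x j ≤ y j) →
    0 < Pr w (fun ω => ∀ j ∈ J, X ω j = x j) →
    0 < Pr w (fun ω => ∀ j ∈ J, X ω j = y j) →
    CondSubvecStochLE w X I (fun ω => ∀ j ∈ J, X ω j = y j)
      (fun ω => ∀ j ∈ J, X ω j = x j)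

/-- Negative left-tail dependence: `[X_I | X_J ≤ x_J] ≥_st [X_I | X_J ≤ x_J*]`
whenever `x_J ≤ x_J*` componentwise and both conditioning events have
positive probability. -/
def IsNLTD {Ω : Type*} [Fintype Ω] {n : ℕ} (w : Ω → ℝ) (X : Ω → Fin n → ℝ) : Prop :=
  ∀ I J : Finset (Fin n), Disjoint I J → ∀ x y : Fin n → ℝ, (∀ j ∈ J, x j ≤ y j) →
    0 < Pr w (fun ω => ∀ j ∈ J, X ω j ≤ x j) →
    0 < Pr w (fun ω => ∀ j ∈ J, X ω j ≤ y j) →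
    CondSubvecStochLE w X I (fun ω => ∀ j ∈ J, X ω j ≤ y j)
      (fun ω => ∀ j ∈ J, X ω j ≤ x j)

/-- Negative right-tail dependence: `[X_I | X_J > x_J] ≥_st [X_I | X_J > x_J*]`
whenever `x_J ≤ x_J*` componentwise and both conditioning events have
positive probability. -/
def IsNRTD {Ω : Type*} [Fintype Ω] {n : ℕ} (w : Ω → ℝ) (X : Ω → Fin n → ℝ) : Prop :=
  ∀ I J : Finset (Fin n), Disjoint I J → ∀ x y : Fin n → ℝ, (∀ j ∈ J, x j ≤ y j) →
    0 < Pr w (fun ω => ∀ j ∈ J, x j < X ω j) →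
    0 < Pr w (fun ω => ∀ j ∈ J, y j < X ω j) →
    CondSubvecStochLE w X I (fun ω => ∀ j ∈ J, y j < X ω j)
      (fun ω => ∀ j ∈ J, x j < X ω j)

/-- Negative association on a finite weighted sample space:
`Cov(ψ₁(X_{A₁}), ψ₂(X_{A₂})) ≤ 0` for disjoint `A₁, A₂` and bounded
coordinatewise increasing `ψ₁, ψ₂`. -/
def IsNAfin {Ω : Type*} [Fintype Ω] {n : ℕ} (w : Ω → ℝ) (X : Ω → Fin n → ℝ) : Prop :=
  ∀ A₁ A₂ : Finset (Fin n), Disjoint A₁ A₂ →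
    ∀ ψ₁ : ({i : Fin n // i ∈ A₁} → ℝ) → ℝ, ∀ ψ₂ : ({i : Fin n // i ∈ A₂} → ℝ) → ℝ,
      Monotone ψ₁ → Monotone ψ₂ → (∃ C, ∀ v, |ψ₁ v| ≤ C) → (∃ C, ∀ v, |ψ₂ v| ≤ C) →
      Expec w (fun ω => (ψ₁ fun i => X ω i.1) * (ψ₂ fun i => X ω i.1))
        ≤ Expec w (fun ω => ψ₁ fun i => X ω i.1) * Expec w (fun ω => ψ₂ fun i => X ω i.1)

/-- The uniform distribution on the permutations of `Fin n`. -/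
def unifPerm (n : ℕ) : Equiv.Perm (Fin n) → ℝ := fun _ => (Nat.factorial n : ℝ)⁻¹

/-- The random vector with the permutation distribution on `a`:
`X = (a_{σ(1)}, …, a_{σ(n)})` for a uniformly random permutation `σ`. -/
def permVec {n : ℕ} (a : Fin n → ℝ) (σ : Equiv.Perm (Fin n)) : Fin n → ℝ :=
  fun i => a (σ i)

/-- The score vector uniformly distributed on the three points
`(1,0,2,0), (0,2,1,0), (0,2,0,1)`. -/
def ko3Score : Fin 3 → Fin 4 → ℝ :=
  ![![1, 0, 2, 0], ![0, 2, 1, 0], ![0, 2, 0, 1]]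

def ko3Unif : Fin 3 → ℝ := fun _ => (3 : ℝ)⁻¹



/-!
Conditioning on the first coordinate `S₁`, the mean of `S₃` goes up when the condition on `S₁`
is raised: from `1/2` to `2` for `S₁ = ·`, from `1/2` to `1` for `S₁ ≤ ·` and from `1` to `2` for
`S₁ > ·`, whereas each of NRD, NLTD, NRTD would force it not to increase. `S₃` takes finitely
many values, so the coordinate itself, clipped to its range, is a bounded increasing test function.
-/

section NegativeDependence

variable {Ω : Type*} [Fintype Ω] {n : ℕ} {w : Ω → ℝ} {X : Ω → Fin n → ℝ}

theorem not_condSubvecStochLE_singleton_of_cExp_lt {k : Fin n} {A B : Ω → Prop}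
    (h : CExp w B (X · k) < CExp w A (X · k)) : ¬ CondSubvecStochLE w X {k} A B := by
  intro hle
  set M := ∑ ω, |X ω k|
  have hM : ∀ ω, |X ω k| ≤ M := fun ω =>
    Finset.single_le_sum (f := fun ω => |X ω k|) (fun _ _ => abs_nonneg _) (Finset.mem_univ ω)
  have hM₀ : 0 ≤ M := Finset.sum_nonneg fun _ _ => abs_nonneg _
  let φ : ({i : Fin n // i ∈ ({k} : Finset (Fin n))} → ℝ) → ℝ :=
    fun v => max (-M) (min (v ⟨k, Finset.mem_singleton_self k⟩) M)
  have hφ_mono : Monotone φ := fun u v huv => max_le_max le_rfl (min_le_min (huv _) le_rfl)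
  have hφ_bdd : ∃ C, ∀ v, |φ v| ≤ C :=
    ⟨M, fun v => abs_le.mpr ⟨le_max_left _ _, max_le (by linarith) (min_le_right _ _)⟩⟩
  have hφX : (fun ω => φ fun i => X ω i.1) = (X · k) := by
    funext ω
    have hω := abs_le.mp (hM ω)
    simp only [φ, min_eq_left hω.2, max_eq_right hω.1]
  have hle' := hle φ hφ_mono hφ_bdd
  rw [hφX] at hle'
  exact lt_irrefl _ (hle'.trans_lt h)

variable {i j : Fin n} {a b : ℝ}

theorem not_isNRD_of_cExp_lt (hij : i ≠ j) (hab : a ≤ b)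
    (ha : 0 < Pr w (fun ω => X ω j = a)) (hb : 0 < Pr w (fun ω => X ω j = b))
    (h : CExp w (fun ω => X ω j = a) (X · i) < CExp w (fun ω => X ω j = b) (X · i)) :
    ¬ IsNRD w X := fun hX => not_condSubvecStochLE_singleton_of_cExp_lt h <| by
  simpa using hX {i} {j} (disjoint_singleton.mpr hij) (fun _ => a) (fun _ => b)
    (by simpa using hab) (by simpa using ha) (by simpa using hb)

theorem not_isNLTD_of_cExp_lt (hij : i ≠ j) (hab : a ≤ b)
    (ha : 0 < Pr w (fun ω => X ω j ≤ a)) (hb : 0 < Pr w (fun ω => X ω j ≤ b))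
    (h : CExp w (fun ω => X ω j ≤ a) (X · i) < CExp w (fun ω => X ω j ≤ b) (X · i)) :
    ¬ IsNLTD w X := fun hX => not_condSubvecStochLE_singleton_of_cExp_lt h <| by
  simpa using hX {i} {j} (disjoint_singleton.mpr hij) (fun _ => a) (fun _ => b)
    (by simpa using hab) (by simpa using ha) (by simpa using hb)

theorem not_isNRTD_of_cExp_lt (hij : i ≠ j) (hab : a ≤ b)
    (ha : 0 < Pr w (fun ω => a < X ω j)) (hb : 0 < Pr w (fun ω => b < X ω j))
    (h : CExp w (fun ω => a < X ω j) (X · i) < CExp w (fun ω => b < X ω j) (X · i)) :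
    ¬ IsNRTD w X := fun hX => not_condSubvecStochLE_singleton_of_cExp_lt h <| by
  simpa using hX {i} {j} (disjoint_singleton.mpr hij) (fun _ => a) (fun _ => b)
    (by simpa using hab) (by simpa using ha) (by simpa using hb)

end NegativeDependence

/-- the random vector `S` uniform on
`{(1,0,2,0), (0,2,1,0), (0,2,0,1)}` is not NRD, not NLTD and not NRTD; in particular
`E[S₃|S₁=0] = 1/2 < 2 = E[S₃|S₁=1]`, `E[S₃|S₁≤0] = 1/2 < 1 = E[S₃|S₁≤1]` and
`E[S₃|S₁≥0] = 1 < 2 = E[S₃|S₁≥1]`. -/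
theorem knockout4_random_draw_example_not_NRD_NLTD_NRTD :
    ¬ IsNRD ko3Unif ko3Score ∧ ¬ IsNLTD ko3Unif ko3Score ∧ ¬ IsNRTD ko3Unif ko3Score ∧
    CExp ko3Unif (fun ω => ko3Score ω 0 = 0) (fun ω => ko3Score ω 2) = 1 / 2 ∧
    CExp ko3Unif (fun ω => ko3Score ω 0 = 1) (fun ω => ko3Score ω 2) = 2 ∧
    CExp ko3Unif (fun ω => ko3Score ω 0 = 0) (fun ω => ko3Score ω 2)
      < CExp ko3Unif (fun ω => ko3Score ω 0 = 1) (fun ω => ko3Score ω 2) ∧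
    CExp ko3Unif (fun ω => ko3Score ω 0 ≤ 0) (fun ω => ko3Score ω 2) = 1 / 2 ∧
    CExp ko3Unif (fun ω => ko3Score ω 0 ≤ 1) (fun ω => ko3Score ω 2) = 1 ∧
    CExp ko3Unif (fun ω => ko3Score ω 0 ≤ 0) (fun ω => ko3Score ω 2)
      < CExp ko3Unif (fun ω => ko3Score ω 0 ≤ 1) (fun ω => ko3Score ω 2) ∧
    CExp ko3Unif (fun ω => (0 : ℝ) ≤ ko3Score ω 0) (fun ω => ko3Score ω 2) = 1 ∧
    CExp ko3Unif (fun ω => (1 : ℝ) ≤ ko3Score ω 0) (fun ω => ko3Score ω 2) = 2 ∧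
    CExp ko3Unif (fun ω => (0 : ℝ) ≤ ko3Score ω 0) (fun ω => ko3Score ω 2)
      < CExp ko3Unif (fun ω => (1 : ℝ) ≤ ko3Score ω 0) (fun ω => ko3Score ω 2) := by
  have h20 : (2 : Fin 4) ≠ 0 := by decide
  refine ⟨not_isNRD_of_cExp_lt h20 zero_le_one ?_ ?_ ?_,
    not_isNLTD_of_cExp_lt h20 zero_le_one ?_ ?_ ?_,
    not_isNRTD_of_cExp_lt (a := -1) (b := 0) h20 (by norm_num) ?_ ?_ ?_,
    ?_, ?_, ?_, ?_, ?_, ?_, ?_, ?_, ?_⟩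
  all_goals norm_num [CExp, Pr, Fin.sum_univ_three, ko3Unif, ko3Score, Matrix.cons_val_two,
    Matrix.vecHead, Matrix.vecTail]
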